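/- arXiv:2409.04839 — 8 statements merged into one kernel-verified Lean document; each statement's English description precedes it below -/
import Mathlib

section
/- Let p be an odd prime and K a cyclic number field of degree p and conductor n = p_1⋯p_s (p unramified), with Gal(K/ℚ) = ⟨θ⟩ and t = Tr_{ℚ(ζ_n)/K}(ζ_n), so that {t, θ(t), …, θ^{p-1}(t)} is an integral basis of O_K. For a prime divisor p_j of n, the prime ideal B_j of O_K above p_j, characterized as B_j = {Σ a_i θ^i(t) : Σ a_i ≡ 0 mod p_j}, satisfies B_j = p_j ℤ t + Σ_{i=1}^{p-1} ℤ (θ^i(t) − t). -/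
/-!
Every `x = ∑ cᵢ θⁱ(t)` equals `∑ cᵢ (θⁱ(t) - t) + (∑ cᵢ) t`, and the linear form `∑ cᵢ` kills
each `θⁱ(t) - t` and sends `q t` to `q`; so the span of `q t` and the `θⁱ(t) - t` is exactly the
set where `q ∣ ∑ cᵢ`.
-/

open NumberField

namespace Module.Basis

variable {ι R M : Type*} [Fintype ι] [CommRing R] [AddCommGroup M] [Module R M]

theorem sumCoords_apply_of_fintype (b : Basis ι R M) (x : M) :
    b.sumCoords x = ∑ i, b.repr x i := by
  rw [coe_sumCoords]
  exact Finsupp.sum_fintype _ _ fun _ => rfl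

theorem eq_sum_smul_sub_add_sumCoords_smul (b : Basis ι R M) (i₀ : ι) (x : M) :
    x = ∑ i, b.repr x i • (b i - b i₀) + b.sumCoords x • b i₀ := by
  simp only [smul_sub, Finset.sum_sub_distrib, sumCoords_apply_of_fintype, Finset.sum_smul,
    sub_add_cancel, b.sum_repr]

theorem dvd_sumCoords_iff_mem_span (b : Basis ι R M) (i₀ : ι) (q : R) (x : M) :
    q ∣ b.sumCoords x ↔
      x ∈ Submodule.span R (insert (q • b i₀) ((fun i => b i - b i₀) '' {i | i ≠ i₀})) := by
  set S := Submodule.span R (insert (q • b i₀) ((fun i => b i - b i₀) '' {i | i ≠ i₀}))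
  have hsub : ∀ i, b i - b i₀ ∈ S := fun i => by
    by_cases hi : i = i₀
    · simp [hi]
    · exact Submodule.subset_span (Set.mem_insert_of_mem _ ⟨i, hi, rfl⟩)
  constructor
  · rintro ⟨d, hd⟩
    rw [b.eq_sum_smul_sub_add_sumCoords_smul i₀ x, hd, mul_comm, mul_smul]
    exact S.add_mem (S.sum_mem fun i _ => S.smul_mem _ (hsub i))
      (S.smul_mem _ (Submodule.subset_span (Set.mem_insert _ _)))
  · intro hx
    suffices S ≤ Submodule.comap b.sumCoords (Ideal.span {q}) by
      simpa [Ideal.mem_span_singleton] using this hx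
    rw [Submodule.span_le]
    rintro _ (rfl | ⟨i, -, rfl⟩) <;>
      simp only [SetLike.mem_coe, Submodule.mem_comap, Ideal.mem_span_singleton, map_smul, map_sub,
        sumCoords_self_apply, smul_eq_mul, mul_one, sub_self, dvd_zero, dvd_refl]

end Module.Basis

theorem stmt_3_general (p : ℕ)
    (K : Type*) [Field K]
    (θ : 𝓞 K ≃ₐ[ℤ] 𝓞 K) (t : 𝓞 K)
    (b : Module.Basis (Fin p) ℤ (𝓞 K)) (hb : ∀ i : Fin p, b i = (θ ^ (i : ℕ)) t)
    (q : ℕ) (α : 𝓞 K) :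
    ((q : ℤ) ∣ ∑ i, b.repr α i) ↔
      α ∈ Submodule.span ℤ
        (insert ((q : 𝓞 K) * t)
          ((fun i : Fin p => (θ ^ (i : ℕ)) t - t) '' {i | (i : ℕ) ≠ 0})) := by
  obtain ⟨i⟩ := b.index_nonempty
  set i₀ : Fin p := ⟨0, i.pos⟩
  have ht : b i₀ = t := by simp [hb, i₀]
  rw [← b.sumCoords_apply_of_fintype, b.dvd_sumCoords_iff_mem_span i₀]
  have hgen : (q : ℤ) • b i₀ = (q : 𝓞 K) * t := by simp [ht]
  have hidx : {i : Fin p | i ≠ i₀} = {i : Fin p | (i : ℕ) ≠ 0} := by ext; simp [Fin.ext_iff, i₀]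
  rw [hgen, hidx, ht]
  simp_rw [hb]

theorem stmt_3 (p : ℕ) (hp : p.Prime) (hodd : Odd p)
    (K : Type*) [Field K] [NumberField K]
    (hdeg : Module.finrank ℚ K = p)
    (θ : 𝓞 K ≃ₐ[ℤ] 𝓞 K) (t : 𝓞 K)
    (b : Module.Basis (Fin p) ℤ (𝓞 K)) (hb : ∀ i : Fin p, b i = (θ ^ (i : ℕ)) t)
    (q : ℕ) (hq : q.Prime) (hq1 : q % p = 1) (α : 𝓞 K) :
    ((q : ℤ) ∣ ∑ i, b.repr α i) ↔
      α ∈ Submodule.span ℤ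
        (insert ((q : 𝓞 K) * t)
          ((fun i : Fin p => (θ ^ (i : ℕ)) t - t) '' {i | (i : ℕ) ≠ 0})) :=
  stmt_3_general p K θ t b hb q α
end

section
/- Let p be an odd prime and K the (unique) subfield of degree p of L = ℚ(ζ_{p²}), where ζ = ζ_{p²} is a primitive p²-th root of unity. Let λ = N_{L/K}(1 − ζ). Then p O_K = B^p where B is the principal ideal λ O_K. Equivalently, the prime of O_K above p is generated by the relative norm of 1 − ζ. -/
open NumberField

/-! With `π = ζ - 1` in `𝓞 L`, total ramification of `p` in `L = ℚ(ζ_{p²})` gives `p ~ π ^ [L:ℚ]`.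
The norm `λ = ∏_{σ ∈ Gal(L/K)} (1 - σ ζ)` is a product of `[L:K]` conjugates of `1 - ζ`, each
associated to `π`, so `λ ~ π ^ [L:K]`. As `[L:ℚ] = p [L:K]`, this gives `p ~ λ ^ p` in `𝓞 L`, and
associatedness descends to `𝓞 K` because `𝓞 K` is integrally closed in `L`. -/

section

variable {K L : Type*} [Field K] [Field L] [Algebra K L]

theorem NumberField.RingOfIntegers.dvd_of_algebraMap_dvd {a b : 𝓞 K}
    (h : algebraMap (𝓞 K) (𝓞 L) a ∣ algebraMap (𝓞 K) (𝓞 L) b) : a ∣ b := by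
  obtain ⟨c, hc⟩ := h
  rcases eq_or_ne a 0 with rfl | ha
  · rw [map_zero, zero_mul, map_eq_zero_iff _ (FaithfulSMul.algebraMap_injective _ _)] at hc
    rw [hc]
  have ha' : (a : K) ≠ 0 := by simpa using ha
  have hcK : algebraMap K L ((b : K) / a) = c := by
    rw [map_div₀, div_eq_iff (by simpa using ha')]
    exact (congr_arg ((↑) : 𝓞 L → L) hc).trans (mul_comm _ _)
  have hint : IsIntegral ℤ ((b : K) / a) :=
    (isIntegral_algebraMap_iff (algebraMap K L).injective).mp (hcK ▸ c.isIntegral_coe)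
  exact ⟨⟨_, hint⟩, RingOfIntegers.ext (mul_div_cancel₀ _ ha').symm⟩

theorem NumberField.RingOfIntegers.associated_of_algebraMap_associated {a b : 𝓞 K}
    (h : Associated (algebraMap (𝓞 K) (𝓞 L) a) (algebraMap (𝓞 K) (𝓞 L) b)) : Associated a b :=
  associated_of_dvd_dvd (dvd_of_algebraMap_dvd (L := L) h.dvd)
    (dvd_of_algebraMap_dvd (L := L) h.symm.dvd)

theorem IsPrimitiveRoot.associated_algebraMap_norm_one_sub [FiniteDimensional K L] [IsGalois K L]
    {n : ℕ} [NeZero n] {ζ : L} (hζ : IsPrimitiveRoot ζ n) {lam : 𝓞 K}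
    (hlam : (lam : K) = Algebra.norm K (1 - ζ)) :
    Associated (algebraMap (𝓞 K) (𝓞 L) lam) ((hζ.toInteger - 1) ^ Module.finrank K L) := by
  have hprod : algebraMap (𝓞 K) (𝓞 L) lam =
      ∏ σ : Gal(L/K), (1 - (hζ.map_of_injective σ.injective).toInteger) := by
    ext
    change algebraMap K L lam = _
    rw [hlam, Algebra.norm_eq_prod_automorphisms]
    push_cast
    exact Finset.prod_congr rfl fun σ _ ↦ by rw [map_sub, map_one]; rfl
  rw [hprod, ← IsGalois.card_aut_eq_finrank, Nat.card_eq_fintype_card, ← Finset.card_univ,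
    ← Finset.prod_const]
  exact Associated.prod _ _ _ fun σ _ ↦ by
    simpa using (IsCyclotomicExtension.Rat.associated_sub_one_of_isPrimitiveRoot n
      (hζ.map_of_injective σ.injective) hζ).neg_left

end

theorem IsCyclotomicExtension.Rat.associated_zeta_sub_one_pow_finrank (p k : ℕ) [Fact p.Prime]
    {L : Type*} [Field L] [NumberField L] [IsCyclotomicExtension {p ^ (k + 1)} ℚ L] {ζ : L}
    (hζ : IsPrimitiveRoot ζ (p ^ (k + 1))) :
    Associated ((hζ.toInteger - 1) ^ Module.finrank ℚ L) (p : 𝓞 L) := by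
  rw [← Ideal.span_singleton_eq_span_singleton, ← Ideal.span_singleton_pow,
    ← map_eq_span_zeta_sub_one_pow p k hζ, Ideal.map_span, Set.image_singleton, map_natCast]

theorem stmt_4_general (p : ℕ) (hp : p.Prime)
    (K : IntermediateField ℚ (CyclotomicField (p ^ 2) ℚ))
    (hdeg : Module.finrank ℚ K = p)
    (ζ : CyclotomicField (p ^ 2) ℚ)
    (hζ : IsPrimitiveRoot ζ (p ^ 2))
    (lam : 𝓞 K)
    (hlam : algebraMap (𝓞 K) K lam = Algebra.norm K ((1 : CyclotomicField (p ^ 2) ℚ) - ζ)) :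
    Ideal.span {(p : 𝓞 K)} = Ideal.span {lam} ^ p := by
  have : Fact p.Prime := ⟨hp⟩
  have : IsCyclotomicExtension {p ^ (1 + 1)} ℚ (CyclotomicField (p ^ 2) ℚ) :=
    CyclotomicField.isCyclotomicExtension _ _
  have : IsGalois ℚ (CyclotomicField (p ^ 2) ℚ) := IsCyclotomicExtension.isGalois {p ^ 2} ℚ _
  have hfinrank : Module.finrank ℚ (CyclotomicField (p ^ 2) ℚ) =
      Module.finrank K (CyclotomicField (p ^ 2) ℚ) * p := by
    rw [← Module.finrank_mul_finrank ℚ K, hdeg, mul_comm]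
  have hpL := IsCyclotomicExtension.Rat.associated_zeta_sub_one_pow_finrank p 1 hζ
  have hlamL := hζ.associated_algebraMap_norm_one_sub hlam
  rw [Ideal.span_singleton_pow, Ideal.span_singleton_eq_span_singleton]
  refine RingOfIntegers.associated_of_algebraMap_associated (L := CyclotomicField (p ^ 2) ℚ) ?_
  rw [map_pow, map_natCast]
  refine hpL.symm.trans ?_
  rw [hfinrank, pow_mul]
  exact hlamL.symm.pow_pow

theorem stmt_4 (p : ℕ) (hp : p.Prime) (hodd : Odd p)
    (K : IntermediateField ℚ (CyclotomicField (p ^ 2) ℚ))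
    (hdeg : Module.finrank ℚ K = p)
    (ζ : CyclotomicField (p ^ 2) ℚ)
    (hζ : IsPrimitiveRoot ζ (p ^ 2))
    (lam : 𝓞 K)
    (hlam : algebraMap (𝓞 K) K lam = Algebra.norm K ((1 : CyclotomicField (p ^ 2) ℚ) - ζ)) :
    Ideal.span {(p : 𝓞 K)} = Ideal.span {lam} ^ p :=
  stmt_4_general p hp K hdeg ζ hζ lam hlam
end

section
/- Under the same setup with p ∣ m, the set {m/p, m − θ(t), m − θ²(t), …, m − θ^{p-1}(t)} is a ℤ-basis of M_m = {α ∈ O_K : Tr_{K/ℚ}(α) ≡ 0 mod m}; in particular M_m is a free ℤ-module of rank p. -/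
/-!
Since `Tr 1 = p` and `Tr θⁱ(t) = 0`, the trace is `p` times the first coordinate in the basis
`1, θ(t), …, θ^{p-1}(t)`, so with `m = p q` the module `M_m` consists of the elements whose first
coordinate is divisible by `q`; it has the evident basis `q, θ(t), …, θ^{p-1}(t)`. The family of the
theorem is the image of that basis under the shear `w₀ ↦ w₀`, `wᵢ ↦ p • w₀ - wᵢ`, which is an
involution on families and therefore preserves both linear independence and the span.
-/

open Submodule Set

section Shear

variable {ι R M : Type*} [DecidableEq ι] [Ring R] [AddCommGroup M] [Module R M]

def shear (i₀ : ι) (p : R) (w : ι → M) : ι → M :=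
  fun i => if i = i₀ then w i₀ else p • w i₀ - w i

variable (i₀ : ι) (p : R) (w : ι → M)

@[simp]
theorem shear_self : shear i₀ p w i₀ = w i₀ := if_pos rfl

theorem shear_of_ne {i : ι} (hi : i ≠ i₀) : shear i₀ p w i = p • w i₀ - w i := if_neg hi

theorem shear_shear : shear i₀ p (shear i₀ p w) = w := by
  funext i
  by_cases hi : i = i₀
  · subst hi; simp
  · simp [shear_of_ne _ _ _ hi]

theorem span_range_shear_le : span R (range (shear i₀ p w)) ≤ span R (range w) := by
  rw [span_le, range_subset_iff]
  intro i
  by_cases hi : i = i₀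
  · subst hi; simpa using subset_span (mem_range_self i)
  · rw [shear_of_ne _ _ _ hi]
    exact sub_mem (smul_mem _ _ (subset_span (mem_range_self i₀))) (subset_span (mem_range_self i))

theorem span_range_shear : span R (range (shear i₀ p w)) = span R (range w) :=
  (span_range_shear_le i₀ p w).antisymm <| by
    simpa only [shear_shear] using span_range_shear_le i₀ p (shear i₀ p w)

theorem linearIndependent_shear_iff :
    LinearIndependent R (shear i₀ p w) ↔ LinearIndependent R w := by
  let c : ι → R := fun i => if i = i₀ then 0 else -p
  let ε : ι → Rˣ := fun i => if i = i₀ then 1 else -1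
  have : shear i₀ p w = ε • (w + (c · • w i₀)) := by
    funext i
    by_cases hi : i = i₀
    · subst hi; simp [ε, c]
    · simp [shear_of_ne _ _ _ hi, ε, c, hi, sub_eq_neg_add]
  rw [this, LinearIndependent.units_smul_iff, linearIndependent_add_smul_iff (by simp [c])]

end Shear

theorem LinearIndependent.smul_of_ne_zero {ι R M : Type*} [Ring R] [NoZeroDivisors R]
    [AddCommGroup M] [Module R M] {v : ι → M} (hv : LinearIndependent R v) {s : ι → R}
    (hs : ∀ i, s i ≠ 0) : LinearIndependent R fun i => s i • v i := by
  rw [linearIndependent_iff'] at hv ⊢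
  intro t g hg i hi
  have := hv t (fun i => g i * s i) (by simpa [mul_smul] using hg) i hi
  exact (mul_eq_zero.1 this).resolve_right (hs i)

theorem Submodule.comap_smul_span_singleton_mul {R M : Type*} [CommRing R] [IsDomain R]
    [AddCommGroup M] [Module R M] (f : M →ₗ[R] R) {p : R} (hp : p ≠ 0) (q : R) :
    comap (p • f) (Ideal.span {p * q}) = comap f (Ideal.span {q}) := by
  ext x
  simp [Ideal.mem_span_singleton, mul_dvd_mul_iff_left hp]

namespace Module.Basis

variable {ι R M : Type*} [CommRing R] [AddCommGroup M] [Module R M] (b : Basis ι R M)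

theorem span_range_smul (s : ι → R) :
    span R (range fun i => s i • b i) = ⨅ i, comap (b.coord i) (Ideal.span {s i}) := by
  apply le_antisymm
  · rw [span_le, range_subset_iff]
    intro j
    simp only [SetLike.mem_coe, mem_iInf, mem_comap, coord_apply, map_smul, repr_self,
      smul_eq_mul, Ideal.mem_span_singleton]
    intro i
    rcases eq_or_ne j i with rfl | h
    · exact dvd_mul_right _ _
    · simp [h]
  · intro x hx
    simp only [mem_iInf, mem_comap, coord_apply, Ideal.mem_span_singleton] at hx
    rw [← b.linearCombination_repr x, Finsupp.linearCombination_apply]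
    refine Submodule.finsuppSum_mem _ _ _ _ fun i _ => ?_
    obtain ⟨d, hd⟩ := hx i
    rw [hd, mul_comm, mul_smul]
    exact smul_mem _ _ (subset_span (mem_range_self i))

variable [DecidableEq ι] (i₀ : ι) (q : R)

theorem span_range_update_smul :
    span R (range fun i => Function.update (1 : ι → R) i₀ q i • b i) =
      comap (b.coord i₀) (Ideal.span {q}) := by
  rw [span_range_smul]
  ext x
  simp only [mem_iInf, mem_comap, coord_apply, Function.update_apply]
  refine ⟨fun h => by simpa using h i₀, fun h i => ?_⟩
  split_ifs with hi
  · exact hi ▸ h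
  · simp

theorem linearIndependent_update_smul [IsDomain R] {q : R} (hq : q ≠ 0) :
    LinearIndependent R fun i => Function.update (1 : ι → R) i₀ q i • b i :=
  b.linearIndependent.smul_of_ne_zero fun i => by
    by_cases hi : i = i₀ <;> simp [hi, hq]

end Module.Basis

open NumberField

theorem stmt_7_general (p m : ℕ) (hp : p.Prime) (hm : 1 < m) (hpm : p ∣ m)
    (K : Type*) [Field K]
    (θ : 𝓞 K ≃ₐ[ℤ] 𝓞 K) (t : 𝓞 K)
    (b : Module.Basis (Fin p) ℤ (𝓞 K)) (hb0 : b ⟨0, hp.pos⟩ = 1)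
    (hb : ∀ i : Fin p, (i : ℕ) ≠ 0 → b i = (θ ^ (i : ℕ)) t)
    (htr1 : Algebra.trace ℤ (𝓞 K) 1 = p)
    (htr : ∀ i : ℕ, Algebra.trace ℤ (𝓞 K) ((θ ^ i) t) = 0) :
    LinearIndependent ℤ
      (fun i : Fin p =>
        if (i : ℕ) = 0 then ((m / p : ℕ) : 𝓞 K) else (m : 𝓞 K) - (θ ^ (i : ℕ)) t) ∧
    Submodule.span ℤ
      (Set.range fun i : Fin p =>
        if (i : ℕ) = 0 then ((m / p : ℕ) : 𝓞 K) else (m : 𝓞 K) - (θ ^ (i : ℕ)) t) =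
      Submodule.comap (Algebra.trace ℤ (𝓞 K)) (Ideal.span {(m : ℤ)} : Submodule ℤ ℤ) := by
  obtain ⟨q, rfl⟩ := hpm
  have hq : (q : ℤ) ≠ 0 := by rintro h; simp_all
  set i₀ : Fin p := ⟨0, hp.pos⟩
  have hi₀ {i : Fin p} (hi : i ≠ i₀) : (i : ℕ) ≠ 0 := fun h => hi (Fin.ext h)
  have hfamily : (fun i : Fin p => if (i : ℕ) = 0 then ((p * q / p : ℕ) : 𝓞 K)
      else ((p * q : ℕ) : 𝓞 K) - (θ ^ (i : ℕ)) t) =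
      shear i₀ (p : ℤ) fun i => Function.update (1 : Fin p → ℤ) i₀ q i • b i := by
    funext i
    by_cases hi : i = i₀
    · simp [hi, hb0, hp.pos, i₀]
    · simp [hi₀ hi, shear_of_ne _ _ _ hi, hb0, hb i (hi₀ hi), hi]
  have htrace : Algebra.trace ℤ (𝓞 K) = (p : ℤ) • b.coord i₀ := b.ext fun i => by
    rw [LinearMap.smul_apply, Module.Basis.coord_apply, Module.Basis.repr_self]
    by_cases hi : i = i₀
    · rw [hi, hb0, htr1]; simp
    · rw [hb i (hi₀ hi), htr]; simp [Ne.symm hi]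
  rw [hfamily, htrace, Nat.cast_mul,
    Submodule.comap_smul_span_singleton_mul _ (by simp [hp.ne_zero])]
  exact ⟨(linearIndependent_shear_iff _ _ _).2 (b.linearIndependent_update_smul i₀ hq),
    (span_range_shear _ _ _).trans (b.span_range_update_smul i₀ _)⟩

theorem stmt_7 (p n u m : ℕ) (hp : p.Prime) (hodd : Odd p)
    (hu : 0 < u) (hn : n = p ^ 2 * u) (hm : 1 < m) (hpm : p ∣ m)
    (K : Type*) [Field K] [NumberField K]
    (hdeg : Module.finrank ℚ K = p)
    (θ : 𝓞 K ≃ₐ[ℤ] 𝓞 K) (t : 𝓞 K)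
    (b : Module.Basis (Fin p) ℤ (𝓞 K)) (hb0 : b ⟨0, hp.pos⟩ = 1)
    (hb : ∀ i : Fin p, (i : ℕ) ≠ 0 → b i = (θ ^ (i : ℕ)) t)
    (htr1 : Algebra.trace ℤ (𝓞 K) 1 = p)
    (htr : ∀ i : ℕ, Algebra.trace ℤ (𝓞 K) ((θ ^ i) t) = 0) :
    LinearIndependent ℤ
      (fun i : Fin p =>
        if (i : ℕ) = 0 then ((m / p : ℕ) : 𝓞 K) else (m : 𝓞 K) - (θ ^ (i : ℕ)) t) ∧
    Submodule.span ℤ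
      (Set.range fun i : Fin p =>
        if (i : ℕ) = 0 then ((m / p : ℕ) : 𝓞 K) else (m : 𝓞 K) - (θ ^ (i : ℕ)) t) =
      Submodule.comap (Algebra.trace ℤ (𝓞 K)) (Ideal.span {(m : ℤ)} : Submodule ℤ ℤ) :=
  stmt_7_general p m hp hm hpm K θ t b hb0 hb htr1 htr
end

section
/- Under the same setup with p ∤ m, the set {m, m − θ(t), m − θ²(t), …, m − θ^{p-1}(t)} is a ℤ-basis of M_m = {α ∈ O_K : Tr_{K/ℚ}(α) ≡ 0 mod m}; in particular M_m is a free ℤ-module of rank p. -/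
/-!
In the basis `b₀ = 1, bᵢ = θⁱ(t)` the family is `m • b₀` and `m • b₀ - bᵢ`: every member has
`b₀`-coordinate `m`, and since the `bᵢ` (`i ≠ 0`) are traceless, the trace is `p` times the
`b₀`-coordinate. Conversely `b₀`-multiples of `m` and the `bᵢ = (m • b₀) - (m • b₀ - bᵢ)` lie in
the span, so the span is `{x | m ∣ coord₀ x} = {x | m ∣ p * coord₀ x} = {x | m ∣ Tr x}`,
the middle step because `p ∤ m`. Reading off the coordinates `i ≠ 0` and then `b₀` of a vanishing
combination gives linear independence.
-/

open NumberField

theorem Submodule.comap_smul_span_singleton_of_isCoprime {R M : Type*} [CommRing R]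
    [AddCommGroup M] [Module R M] (g : M →ₗ[R] R) {c m : R} (h : IsCoprime m c) :
    Submodule.comap (c • g) (Ideal.span {m}) = Submodule.comap g (Ideal.span {m}) := by
  ext x
  simpa [Ideal.mem_span_singleton] using ⟨h.dvd_of_dvd_mul_left, fun hx => hx.mul_left c⟩

namespace Module.Basis

variable {ι R M : Type*} [DecidableEq ι] [CommRing R] [AddCommGroup M] [Module R M]
  (b : Basis ι R M) (i₀ : ι)

noncomputable def offsetFamily (m : R) (i : ι) : M :=
  if i = i₀ then m • b i₀ else m • b i₀ - b i

theorem repr_offsetFamily_self (m : R) (i : ι) : b.repr (b.offsetFamily i₀ m i) i₀ = m := by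
  by_cases hi : i = i₀ <;> simp [offsetFamily, hi, Ne.symm]

theorem repr_offsetFamily_of_ne (m : R) (i : ι) {j : ι} (hj : j ≠ i₀) :
    b.repr (b.offsetFamily i₀ m i) j = if i = j then -1 else 0 := by
  by_cases hi : i = i₀
  · subst hi
    simp [offsetFamily, Ne.symm hj, hj]
  · simp [offsetFamily, hi, Finsupp.single_apply, Ne.symm hj, neg_ite]

theorem linearIndependent_offsetFamily [Fintype ι] [IsDomain R] {m : R} (hm : m ≠ 0) :
    LinearIndependent R (b.offsetFamily i₀ m) := by
  rw [Fintype.linearIndependent_iff]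
  intro g hg
  have hcoord (j : ι) : ∑ i, g i * b.repr (b.offsetFamily i₀ m i) j = 0 := by
    simpa using congr(b.repr $hg j)
  have hne (j : ι) (hj : j ≠ i₀) : g j = 0 := by
    simpa [b.repr_offsetFamily_of_ne i₀ m _ hj] using hcoord j
  intro j
  by_cases hj : j = i₀
  · subst hj
    have hsum : (∑ i, g i) * m = 0 := by
      simpa [b.repr_offsetFamily_self, Finset.sum_mul] using hcoord j
    rwa [Finset.sum_eq_single j (fun i _ hi => hne i hi) (by simp),
      mul_eq_zero, or_iff_left hm] at hsum
  · exact hne j hj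

theorem span_offsetFamily [Fintype ι] (m : R) :
    Submodule.span R (Set.range (b.offsetFamily i₀ m)) =
      Submodule.comap (b.coord i₀) (Ideal.span {m}) := by
  apply le_antisymm
  · rw [Submodule.span_le]
    rintro _ ⟨i, rfl⟩
    simp [b.repr_offsetFamily_self]
  · intro x hx
    obtain ⟨k, hk⟩ : ∃ k, k * m = b.repr x i₀ := Ideal.mem_span_singleton'.mp hx
    have hmem (i : ι) :
        b.offsetFamily i₀ m i ∈ Submodule.span R (Set.range (b.offsetFamily i₀ m)) :=
      Submodule.subset_span ⟨i, rfl⟩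
    rw [← b.sum_repr x]
    refine Submodule.sum_mem _ fun i _ => ?_
    by_cases hi : i = i₀
    · subst hi
      have : b.repr x i • b i = k • b.offsetFamily i m i := by
        simp [offsetFamily, smul_smul, ← hk]
      exact this ▸ Submodule.smul_mem _ _ (hmem i)
    · have : b i = b.offsetFamily i₀ m i₀ - b.offsetFamily i₀ m i := by
        simp [offsetFamily, hi]
      exact this ▸ Submodule.smul_mem _ _ (Submodule.sub_mem _ (hmem i₀) (hmem i))

theorem eq_smul_coord_of_apply_eq_zero {f : M →ₗ[R] R} (hf : ∀ i ≠ i₀, f (b i) = 0) :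
    f = f (b i₀) • b.coord i₀ := by
  refine b.ext fun i => ?_
  by_cases hi : i = i₀
  · simp [hi]
  · simp [hf i hi, hi]

theorem span_offsetFamily_eq_comap [Fintype ι] {f : M →ₗ[R] R} {m : R}
    (hf : ∀ i ≠ i₀, f (b i) = 0) (hm : IsCoprime m (f (b i₀))) :
    Submodule.span R (Set.range (b.offsetFamily i₀ m)) =
      Submodule.comap f (Ideal.span {m}) := by
  rw [b.eq_smul_coord_of_apply_eq_zero i₀ hf,
    Submodule.comap_smul_span_singleton_of_isCoprime _ hm, b.span_offsetFamily]

end Module.Basis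

theorem stmt_8_general (p m : ℕ) (hp : p.Prime) (hpm : ¬ p ∣ m)
    (K : Type*) [Field K]
    (θ : 𝓞 K ≃ₐ[ℤ] 𝓞 K) (t : 𝓞 K)
    (b : Module.Basis (Fin p) ℤ (𝓞 K)) (hb0 : b ⟨0, hp.pos⟩ = 1)
    (hb : ∀ i : Fin p, (i : ℕ) ≠ 0 → b i = (θ ^ (i : ℕ)) t)
    (htr1 : Algebra.trace ℤ (𝓞 K) 1 = p)
    (htr : ∀ i : ℕ, Algebra.trace ℤ (𝓞 K) ((θ ^ i) t) = 0) :
    LinearIndependent ℤ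
      (fun i : Fin p =>
        if (i : ℕ) = 0 then ((m : ℕ) : 𝓞 K) else (m : 𝓞 K) - (θ ^ (i : ℕ)) t) ∧
    Submodule.span ℤ
      (Set.range fun i : Fin p =>
        if (i : ℕ) = 0 then ((m : ℕ) : 𝓞 K) else (m : 𝓞 K) - (θ ^ (i : ℕ)) t) =
      Submodule.comap (Algebra.trace ℤ (𝓞 K)) (Ideal.span {(m : ℤ)} : Submodule ℤ ℤ) := by
  set i₀ : Fin p := ⟨0, hp.pos⟩
  have hzero {i : Fin p} : (i : ℕ) = 0 ↔ i = i₀ := (Fin.ext_iff (b := i₀)).symm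
  have hfamily : (fun i : Fin p =>
      if (i : ℕ) = 0 then ((m : ℕ) : 𝓞 K) else (m : 𝓞 K) - (θ ^ (i : ℕ)) t) =
      b.offsetFamily i₀ (m : ℤ) := by
    funext i
    by_cases hi : i = i₀
    · simp [Module.Basis.offsetFamily, hi, hb0, i₀]
    · simp [Module.Basis.offsetFamily, hi, hb0, hb i (hzero.not.mpr hi), hzero]
  have htr_b (i : Fin p) (hi : i ≠ i₀) : Algebra.trace ℤ (𝓞 K) (b i) = 0 := by
    rw [hb i (hzero.not.mpr hi), htr]
  have hcop : IsCoprime (m : ℤ) (Algebra.trace ℤ (𝓞 K) (b i₀)) := by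
    rw [hb0, htr1]
    exact Nat.isCoprime_iff_coprime.mpr ((hp.coprime_iff_not_dvd.mpr hpm).symm)
  have hm0 : (m : ℤ) ≠ 0 := by
    rintro hm
    exact hpm (by simp_all)
  rw [hfamily]
  exact ⟨b.linearIndependent_offsetFamily i₀ hm0, b.span_offsetFamily_eq_comap i₀ htr_b hcop⟩

theorem stmt_8 (p n u m : ℕ) (hp : p.Prime) (hodd : Odd p)
    (hu : 0 < u) (hn : n = p ^ 2 * u) (hm : 1 < m) (hpm : ¬ p ∣ m)
    (K : Type*) [Field K] [NumberField K]
    (hdeg : Module.finrank ℚ K = p)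
    (θ : 𝓞 K ≃ₐ[ℤ] 𝓞 K) (t : 𝓞 K)
    (b : Module.Basis (Fin p) ℤ (𝓞 K)) (hb0 : b ⟨0, hp.pos⟩ = 1)
    (hb : ∀ i : Fin p, (i : ℕ) ≠ 0 → b i = (θ ^ (i : ℕ)) t)
    (htr1 : Algebra.trace ℤ (𝓞 K) 1 = p)
    (htr : ∀ i : ℕ, Algebra.trace ℤ (𝓞 K) ((θ ^ i) t) = 0) :
    LinearIndependent ℤ
      (fun i : Fin p =>
        if (i : ℕ) = 0 then ((m : ℕ) : 𝓞 K) else (m : 𝓞 K) - (θ ^ (i : ℕ)) t) ∧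
    Submodule.span ℤ
      (Set.range fun i : Fin p =>
        if (i : ℕ) = 0 then ((m : ℕ) : 𝓞 K) else (m : 𝓞 K) - (θ ^ (i : ℕ)) t) =
      Submodule.comap (Algebra.trace ℤ (𝓞 K)) (Ideal.span {(m : ℤ)} : Submodule ℤ ℤ) :=
  stmt_8_general p m hp hpm K θ t b hb0 hb htr1 htr
end

section
/- Let p be an odd prime, K a cyclic number field of degree p with conductor n in which p is ramified, u = n/p², and m a positive multiple of p. If α = a_0(m/p) + Σ_{i=1}^{p-1} a_i(m − θ^i(t)) with a_i ∈ ℤ, then Tr_{K/ℚ}(α²) = p[ (a_0 m/p + m Σ_{i=1}^{p-1} a_i)² + u( p Σ_{i=1}^{p-1} a_i² − (Σ_{i=1}^{p-1} a_i)² ) ]. -/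
/-!
Write `xᵢ = θⁱ(t)` and `z = a₀ (m/p) + m ∑ aᵢ`, so that `α = z - ∑ aᵢ xᵢ`. Since `Tr` is
`ℤ`-linear and `Tr xᵢ = 0`, the cross term drops out and `Tr α² = z² Tr 1 + Tr (∑ aᵢ xᵢ)²`.
The last trace is a quadratic form whose Gram matrix is `-pu` off the diagonal and `p u (p - 1)`
on it, i.e. `-pu (∑ aᵢ)² + p² u ∑ aᵢ²`.
-/

open NumberField

section TraceForm

variable {R A : Type*} [CommRing R] [CommRing A] [Algebra R A] (f : A →ₗ[R] R)

theorem LinearMap.map_sq_smul_one_sub {y : A} (hy : f y = 0) (z : R) :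
    f ((z • 1 - y) ^ 2) = z ^ 2 * f 1 + f (y ^ 2) := by
  have hcross : f (2 * (z • 1) * y) = 0 := by
    rw [mul_smul_comm, mul_one, smul_mul_assoc, map_smul, two_mul, map_add, hy, add_zero,
      smul_zero]
  rw [sub_sq, map_add, map_sub, hcross, sq (z • (1 : A)), smul_mul_smul, one_mul, map_smul,
    smul_eq_mul]
  ring

theorem LinearMap.map_sq_sum_smul_of_gram {ι : Type*} [DecidableEq ι] {S : Finset ι}
    {x : ι → A} {d e : R} (hx : ∀ i ∈ S, ∀ j ∈ S, f (x i * x j) = if i = j then d else e)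
    (c : ι → R) :
    f ((∑ i ∈ S, c i • x i) ^ 2) = e * (∑ i ∈ S, c i) ^ 2 + (d - e) * ∑ i ∈ S, c i ^ 2 := by
  have hentry : ∀ i ∈ S, ∀ j ∈ S, f (c i • x i * (c j • x j)) =
      e * (c i * c j) + if i = j then (d - e) * c i ^ 2 else 0 := by
    intro i hi j hj
    rw [smul_mul_smul, map_smul, hx i hi j hj, smul_eq_mul]
    split_ifs with hij
    · subst hij; ring
    · ring
  rw [sq, Finset.sum_mul_sum, map_sum,
    Finset.sum_congr rfl fun i hi => (map_sum f _ S).trans (Finset.sum_congr rfl (hentry i hi))]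
  simp only [Finset.sum_add_distrib, Finset.sum_ite_eq, ← Finset.mul_sum]
  rw [Finset.sum_ite_mem, Finset.inter_self, ← Finset.mul_sum, ← Finset.sum_mul]
  ring

end TraceForm

theorem stmt_9_general (p u m : ℕ) (hp : p.Prime)
    (K : Type*) [Field K]
    (θ : 𝓞 K ≃ₐ[ℤ] 𝓞 K) (t : 𝓞 K)
    (htr1 : Algebra.trace ℤ (𝓞 K) 1 = p)
    (htr : ∀ i : ℕ, Algebra.trace ℤ (𝓞 K) ((θ ^ i) t) = 0)
    (htr2 : ∀ i j : ℕ, Algebra.trace ℤ (𝓞 K) ((θ ^ i) t * (θ ^ j) t) =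
      if i % p = j % p then (p * u * (p - 1) : ℤ) else -(p * u))
    (a : Fin p → ℤ) :
    Algebra.trace ℤ (𝓞 K)
      ((a ⟨0, hp.pos⟩ • ((m / p : ℕ) : 𝓞 K) +
        ∑ i ∈ Finset.univ.filter (fun i : Fin p => (i : ℕ) ≠ 0),
          a i • ((m : 𝓞 K) - (θ ^ (i : ℕ)) t)) ^ 2) =
    (p : ℤ) *
      ((a ⟨0, hp.pos⟩ * ((m / p : ℕ) : ℤ) +
          (m : ℤ) * ∑ i ∈ Finset.univ.filter (fun i : Fin p => (i : ℕ) ≠ 0), a i) ^ 2 +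
        (u : ℤ) *
          ((p : ℤ) * ∑ i ∈ Finset.univ.filter (fun i : Fin p => (i : ℕ) ≠ 0), (a i) ^ 2 -
            (∑ i ∈ Finset.univ.filter (fun i : Fin p => (i : ℕ) ≠ 0), a i) ^ 2)) := by
  set S := Finset.univ.filter (fun i : Fin p => (i : ℕ) ≠ 0)
  set x : Fin p → 𝓞 K := fun i => (θ ^ (i : ℕ)) t
  have hα : a ⟨0, hp.pos⟩ • ((m / p : ℕ) : 𝓞 K) + ∑ i ∈ S, a i • ((m : 𝓞 K) - x i) =
      (a ⟨0, hp.pos⟩ * ((m / p : ℕ) : ℤ) + m * ∑ i ∈ S, a i) • 1 - ∑ i ∈ S, a i • x i := by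
    simp only [smul_sub, Finset.sum_sub_distrib, zsmul_eq_mul, ← Finset.sum_mul, Int.cast_add,
      Int.cast_mul, Int.cast_natCast, Int.cast_sum]
    ring
  have hgram : ∀ i ∈ S, ∀ j ∈ S, Algebra.trace ℤ (𝓞 K) (x i * x j) =
      if i = j then (p * u * (p - 1) : ℤ) else -(p * u) := by
    intro i _ j _
    rw [htr2, Nat.mod_eq_of_lt i.isLt, Nat.mod_eq_of_lt j.isLt]
    exact if_congr Fin.val_inj rfl rfl
  have hlin : Algebra.trace ℤ (𝓞 K) (∑ i ∈ S, a i • x i) = 0 := by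
    simp only [map_sum, map_zsmul, x, htr, smul_zero, Finset.sum_const_zero]
  rw [hα, LinearMap.map_sq_smul_one_sub _ hlin, LinearMap.map_sq_sum_smul_of_gram _ hgram, htr1]
  ring

theorem stmt_9 (p n u m : ℕ) (hp : p.Prime) (hodd : Odd p)
    (hu : 0 < u) (hn : n = p ^ 2 * u) (hm : 0 < m) (hpm : p ∣ m)
    (K : Type*) [Field K] [NumberField K]
    (hdeg : Module.finrank ℚ K = p)
    (θ : 𝓞 K ≃ₐ[ℤ] 𝓞 K) (t : 𝓞 K)
    (b : Module.Basis (Fin p) ℤ (𝓞 K)) (hb0 : b ⟨0, hp.pos⟩ = 1)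
    (hb : ∀ i : Fin p, (i : ℕ) ≠ 0 → b i = (θ ^ (i : ℕ)) t)
    (htr1 : Algebra.trace ℤ (𝓞 K) 1 = p)
    (htr : ∀ i : ℕ, Algebra.trace ℤ (𝓞 K) ((θ ^ i) t) = 0)
    (htr2 : ∀ i j : ℕ, Algebra.trace ℤ (𝓞 K) ((θ ^ i) t * (θ ^ j) t) =
      if i % p = j % p then (p * u * (p - 1) : ℤ) else -(p * u))
    (a : Fin p → ℤ) :
    Algebra.trace ℤ (𝓞 K)
      ((a ⟨0, hp.pos⟩ • ((m / p : ℕ) : 𝓞 K) +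
        ∑ i ∈ Finset.univ.filter (fun i : Fin p => (i : ℕ) ≠ 0),
          a i • ((m : 𝓞 K) - (θ ^ (i : ℕ)) t)) ^ 2) =
    (p : ℤ) *
      ((a ⟨0, hp.pos⟩ * ((m / p : ℕ) : ℤ) +
          (m : ℤ) * ∑ i ∈ Finset.univ.filter (fun i : Fin p => (i : ℕ) ≠ 0), a i) ^ 2 +
        (u : ℤ) *
          ((p : ℤ) * ∑ i ∈ Finset.univ.filter (fun i : Fin p => (i : ℕ) ≠ 0), (a i) ^ 2 -
            (∑ i ∈ Finset.univ.filter (fun i : Fin p => (i : ℕ) ≠ 0), a i) ^ 2)) :=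
  stmt_9_general p u m hp K θ t htr1 htr htr2 a
end

section
/- Let p be an odd prime, K a cyclic number field of degree p with conductor n = p²u, p ramified, and m a positive multiple of p. For the module M_m = {α ∈ O_K : Tr_{K/ℚ}(α) ≡ 0 mod m}, the minimum of Tr_{K/ℚ}(α²) over nonzero α ∈ M_m equals min{ m²/p, u p (p−1) }. -/
/-!
Write `α = a + ∑_{i ≠ 0} cᵢ θⁱ(t)` in the basis `1, θ(t), …, θ^{p-1}(t)`. Since the `θⁱ(t)` have trace
zero, `Tr α = p a` and `Tr α² = p a² + p u (p ∑ cᵢ² - (∑ cᵢ)²)`, so `α ∈ M_m` iff `m / p ∣ a`.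
By Cauchy–Schwarz the second summand is nonnegative, and if `N` of the `cᵢ` are nonzero it is at least
`p u (p - N) N ≥ p u (p - 1)`. Hence `Tr α² ≥ p (m / p)² = m² / p` when `a ≠ 0` and `Tr α² ≥ u p (p - 1)`
otherwise; the two bounds are attained by `m / p` and `θ(t)`.
-/

open Finset NumberField

section SumSq

variable {ι : Type*} (s : Finset ι) (c : ι → ℤ) (p : ℕ)

lemma sq_sum_le_mul_sum_sq (hs : #s ≤ p) : (∑ i ∈ s, c i) ^ 2 ≤ p * ∑ i ∈ s, c i ^ 2 :=
  sq_sum_le_card_mul_sum_sq.trans (by gcongr)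

lemma sub_one_le_mul_sum_sq_sub_sq_sum (hs : #s < p) {k : ι} (hk : k ∈ s) (hck : c k ≠ 0) :
    (p : ℤ) - 1 ≤ p * ∑ i ∈ s, c i ^ 2 - (∑ i ∈ s, c i) ^ 2 := by
  classical
  set t := s.filter (c · ≠ 0)
  have hsum : ∑ i ∈ s, c i = ∑ i ∈ t, c i := (sum_filter_ne_zero s).symm
  have hsumsq : ∑ i ∈ s, c i ^ 2 = ∑ i ∈ t, c i ^ 2 := by
    rw [sum_filter_of_ne]
    intro i _ h hc
    simp [hc] at h
  have ht_pos : (1 : ℤ) ≤ #t := by exact_mod_cast card_pos.mpr ⟨k, mem_filter.mpr ⟨hk, hck⟩⟩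
  have ht_lt : (#t : ℤ) + 1 ≤ p := by exact_mod_cast (card_filter_le _ _).trans_lt hs
  have hcard_le : (#t : ℤ) ≤ ∑ i ∈ t, c i ^ 2 := by
    simpa using card_nsmul_le_sum t (c · ^ 2) 1
      fun i hi => pow_two_pos_of_ne_zero (mem_filter.mp hi).2
  have hcs : (∑ i ∈ t, c i) ^ 2 ≤ #t * ∑ i ∈ t, c i ^ 2 := sq_sum_le_card_mul_sum_sq
  -- `p Q - L² ≥ (p - #t) Q ≥ (p - #t) #t ≥ p - 1`, as `1 ≤ #t ≤ p - 1`
  rw [hsum, hsumsq]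
  nlinarith [mul_le_mul_of_nonneg_left hcard_le (by linarith : (0 : ℤ) ≤ p - #t)]

lemma min_le_mul_sq_add_mul_sum_sq_sub_sq_sum {M u : ℕ} {a : ℤ} (hs : #s < p) (ha : (M : ℤ) ∣ a)
    (hne : a ≠ 0 ∨ ∃ k ∈ s, c k ≠ 0) :
    min ((p : ℤ) * M ^ 2) (p * u * (p - 1)) ≤
      p * a ^ 2 + p * u * (p * ∑ i ∈ s, c i ^ 2 - (∑ i ∈ s, c i) ^ 2) := by
  have hpu : (0 : ℤ) ≤ p * u := by positivity
  have hquad : 0 ≤ p * ∑ i ∈ s, c i ^ 2 - (∑ i ∈ s, c i) ^ 2 :=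
    sub_nonneg.mpr (sq_sum_le_mul_sum_sq s c p hs.le)
  rcases hne with ha0 | ⟨k, hk, hck⟩
  · have hMa : (M : ℤ) ^ 2 ≤ a ^ 2 := by
      rw [← Int.natAbs_sq a]
      exact_mod_cast Nat.pow_le_pow_left (Int.natAbs_le_of_dvd_ne_zero ha ha0) 2
    calc min ((p : ℤ) * M ^ 2) (p * u * (p - 1)) ≤ p * M ^ 2 := min_le_left _ _
      _ ≤ p * a ^ 2 := by gcongr
      _ ≤ _ := le_add_of_nonneg_right (mul_nonneg hpu hquad)
  · calc min ((p : ℤ) * M ^ 2) (p * u * (p - 1)) ≤ p * u * (p - 1) := min_le_right _ _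
      _ ≤ p * u * (p * ∑ i ∈ s, c i ^ 2 - (∑ i ∈ s, c i) ^ 2) :=
        mul_le_mul_of_nonneg_left (sub_one_le_mul_sum_sq_sub_sq_sum s c p hs hk hck) hpu
      _ ≤ _ := le_add_of_nonneg_left (by positivity)

end SumSq

lemma cast_min_mul_sq_div {p : ℕ} (hp : 0 < p) (M u : ℕ) :
    ((min ((p * M) ^ 2 / p) (u * p * (p - 1)) : ℕ) : ℤ) = min ((p : ℤ) * M ^ 2) (p * u * (p - 1)) := by
  rw [mul_pow, sq p, mul_assoc, Nat.mul_div_cancel_left _ hp, Nat.cast_min]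
  push_cast [Nat.cast_sub hp]
  ring_nf

lemma sum_sum_mul_mul_ite_sub {ι R : Type*} [CommRing R] [DecidableEq ι] (s : Finset ι) (c : ι → R)
    (r d : R) :
    ∑ i ∈ s, ∑ j ∈ s, c i * c j * ((if i = j then r else 0) - d) =
      r * ∑ i ∈ s, c i ^ 2 - d * (∑ i ∈ s, c i) ^ 2 := by
  rw [sq (∑ i ∈ s, c i), sum_mul_sum, mul_sum, mul_sum]
  simp only [mul_sub, sum_sub_distrib, mul_ite, mul_zero, sum_ite_eq, mul_sum]
  congr 1
  · exact sum_congr rfl fun i hi => by rw [if_pos hi]; ring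
  · exact sum_congr rfl fun i _ => sum_congr rfl fun j _ => by ring

section BasisWithOne

variable {R A ι : Type*} [CommRing R] [CommRing A] [Algebra R A] [Fintype ι] [DecidableEq ι]
  {b : Module.Basis ι R A} {z : ι}

lemma Module.Basis.smul_one_add_sum_erase_eq (hz : b z = 1) (x : A) :
    b.repr x z • 1 + ∑ i ∈ univ.erase z, b.repr x i • b i = x := by
  rw [← hz, add_sum_erase _ (fun i => b.repr x i • b i) (mem_univ z), b.sum_repr]

lemma Module.Basis.repr_ne_zero_or_exists_mem_erase {x : A} (hx : x ≠ 0) :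
    b.repr x z ≠ 0 ∨ ∃ k ∈ univ.erase z, b.repr x k ≠ 0 := by
  obtain ⟨k, hk⟩ : ∃ k, b.repr x k ≠ 0 := by
    by_contra! h
    exact hx (b.repr.map_eq_zero_iff.mp (Finsupp.ext h))
  by_cases hkz : k = z
  · exact .inl (hkz ▸ hk)
  · exact .inr ⟨k, mem_erase.mpr ⟨hkz, mem_univ k⟩, hk⟩

variable (T : A →ₗ[R] R) (he : ∀ i ≠ z, T (b i) = 0)
include he

lemma LinearMap.map_sum_erase_smul_eq_zero (c : ι → R) : T (∑ i ∈ univ.erase z, c i • b i) = 0 := by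
  rw [map_sum]
  exact sum_eq_zero fun i hi => by rw [map_smul, he i (ne_of_mem_erase hi), smul_zero]

lemma LinearMap.map_eq_repr_mul_map_one (hz : b z = 1) (x : A) : T x = b.repr x z * T 1 := by
  conv_lhs => rw [← b.smul_one_add_sum_erase_eq hz x]
  rw [map_add, map_smul, T.map_sum_erase_smul_eq_zero he, smul_eq_mul, add_zero]

lemma LinearMap.map_sq_eq_repr (hz : b z = 1) (r d : R)
    (hee : ∀ i ≠ z, ∀ j ≠ z, T (b i * b j) = (if i = j then r else 0) - d) (x : A) :
    T (x ^ 2) = b.repr x z ^ 2 * T 1 +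
      (r * ∑ i ∈ univ.erase z, b.repr x i ^ 2 - d * (∑ i ∈ univ.erase z, b.repr x i) ^ 2) := by
  set β := ∑ i ∈ univ.erase z, b.repr x i • b i
  have hβ : T β = 0 := T.map_sum_erase_smul_eq_zero he _
  have hβ2 : T (β ^ 2) =
      r * ∑ i ∈ univ.erase z, b.repr x i ^ 2 - d * (∑ i ∈ univ.erase z, b.repr x i) ^ 2 := by
    rw [← sum_sum_mul_mul_ite_sub, sq, sum_mul_sum, map_sum]
    refine sum_congr rfl fun i hi => ?_
    rw [map_sum]
    refine sum_congr rfl fun j hj => ?_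
    rw [smul_mul_smul_comm, map_smul, hee i (ne_of_mem_erase hi) j (ne_of_mem_erase hj), smul_eq_mul]
  have hsq : (b.repr x z • (1 : A) + β) ^ 2 = (b.repr x z ^ 2) • 1 + (2 * b.repr x z) • β + β ^ 2 := by
    simp only [Algebra.smul_def, map_mul, map_pow, map_ofNat]
    ring
  conv_lhs => rw [← b.smul_one_add_sum_erase_eq hz x]
  rw [hsq, map_add, map_add, map_smul, map_smul, hβ, hβ2, smul_eq_mul, smul_zero, add_zero]

end BasisWithOne

theorem stmt_11_general (p u m : ℕ) (hp : p.Prime) (hm : 0 < m) (hpm : p ∣ m)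
    (K : Type*) [Field K]
    (θ : 𝓞 K ≃ₐ[ℤ] 𝓞 K) (t : 𝓞 K)
    (b : Module.Basis (Fin p) ℤ (𝓞 K)) (hb0 : b ⟨0, hp.pos⟩ = 1)
    (hb : ∀ i : Fin p, (i : ℕ) ≠ 0 → b i = (θ ^ (i : ℕ)) t)
    (htr1 : Algebra.trace ℤ (𝓞 K) 1 = p)
    (htr : ∀ i : ℕ, Algebra.trace ℤ (𝓞 K) ((θ ^ i) t) = 0)
    (htr2 : ∀ i j : ℕ, Algebra.trace ℤ (𝓞 K) ((θ ^ i) t * (θ ^ j) t) =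
      if i % p = j % p then (p * u * (p - 1) : ℤ) else -(p * u)) :
    IsLeast
      {x : ℤ | ∃ α : 𝓞 K,
        α ∈ Submodule.comap (Algebra.trace ℤ (𝓞 K)) (Ideal.span {(m : ℤ)} : Submodule ℤ ℤ) ∧
        α ≠ 0 ∧ x = Algebra.trace ℤ (𝓞 K) (α ^ 2)}
      (↑(min (m ^ 2 / p) (u * p * (p - 1)))) := by
  classical
  obtain ⟨M, rfl⟩ := hpm
  set Tr := Algebra.trace ℤ (𝓞 K)
  set z : Fin p := ⟨0, hp.pos⟩
  have hbz : ∀ i ≠ z, b i = (θ ^ (i : ℕ)) t := fun i hi => hb i fun h => hi (Fin.ext h)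
  have he : ∀ i ≠ z, Tr (b i) = 0 := fun i hi => by rw [hbz i hi, htr]
  have hee : ∀ i ≠ z, ∀ j ≠ z, Tr (b i * b j) = (if i = j then (p * u * p : ℤ) else 0) - p * u := by
    intro i hi j hj
    rw [hbz i hi, hbz j hj, htr2, Nat.mod_eq_of_lt i.isLt, Nat.mod_eq_of_lt j.isLt]
    simp only [Fin.val_inj]
    split_ifs <;> ring
  have hmem : ∀ α, α ∈ Submodule.comap Tr (Ideal.span {((p * M : ℕ) : ℤ)} : Submodule ℤ ℤ) ↔
      (M : ℤ) ∣ b.repr α z := by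
    intro α
    rw [Submodule.mem_comap, Ideal.mem_span_singleton, Tr.map_eq_repr_mul_map_one he hb0, htr1,
      Nat.cast_mul, mul_comm (b.repr α z)]
    exact mul_dvd_mul_iff_left (by exact_mod_cast hp.ne_zero)
  rw [cast_min_mul_sq_div hp.pos]
  refine ⟨?_, ?_⟩
  · rcases min_choice (p * M ^ 2 : ℤ) (p * u * (p - 1)) with h | h <;> rw [h]
    · have hrepr : b.repr ((M : ℤ) • b z) z = M := by
        rw [map_smul, b.repr_self, Finsupp.smul_apply, Finsupp.single_eq_same, smul_eq_mul, mul_one]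
      refine ⟨(M : ℤ) • b z, (hmem _).2 (hrepr.symm ▸ dvd_rfl), fun h0 => ?_, ?_⟩
      · have hM : (M : ℤ) ≠ 0 := by exact_mod_cast right_ne_zero_of_mul hm.ne'
        exact hM (by rw [← hrepr, h0, map_zero, Finsupp.zero_apply])
      · rw [hb0, smul_pow, one_pow, map_smul, htr1, smul_eq_mul, mul_comm]
    · have h1z : (⟨1, hp.one_lt⟩ : Fin p) ≠ z := by simp [z, Fin.ext_iff]
      refine ⟨b ⟨1, hp.one_lt⟩, (hmem _).2 (by simp [h1z]), b.ne_zero _, ?_⟩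
      rw [sq, hee _ h1z _ h1z, if_pos rfl]
      ring
  · rintro _ ⟨α, hα, hα0, rfl⟩
    have hcard : #(univ.erase z) < p := by simpa using card_erase_lt_of_mem (mem_univ z)
    rw [Tr.map_sq_eq_repr he hb0 _ _ hee, htr1]
    exact (min_le_mul_sq_add_mul_sum_sq_sub_sq_sum _ (b.repr α ·) p hcard ((hmem α).1 hα)
      (b.repr_ne_zero_or_exists_mem_erase hα0)).trans_eq (by ring)

theorem stmt_11 (p n u m : ℕ) (hp : p.Prime) (hodd : Odd p)
    (hu : 0 < u) (hn : n = p ^ 2 * u) (hm : 0 < m) (hpm : p ∣ m)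
    (K : Type*) [Field K] [NumberField K]
    (hdeg : Module.finrank ℚ K = p)
    (θ : 𝓞 K ≃ₐ[ℤ] 𝓞 K) (t : 𝓞 K)
    (b : Module.Basis (Fin p) ℤ (𝓞 K)) (hb0 : b ⟨0, hp.pos⟩ = 1)
    (hb : ∀ i : Fin p, (i : ℕ) ≠ 0 → b i = (θ ^ (i : ℕ)) t)
    (htr1 : Algebra.trace ℤ (𝓞 K) 1 = p)
    (htr : ∀ i : ℕ, Algebra.trace ℤ (𝓞 K) ((θ ^ i) t) = 0)
    (htr2 : ∀ i j : ℕ, Algebra.trace ℤ (𝓞 K) ((θ ^ i) t * (θ ^ j) t) =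
      if i % p = j % p then (p * u * (p - 1) : ℤ) else -(p * u)) :
    IsLeast
      {x : ℤ | ∃ α : 𝓞 K,
        α ∈ Submodule.comap (Algebra.trace ℤ (𝓞 K)) (Ideal.span {(m : ℤ)} : Submodule ℤ ℤ) ∧
        α ≠ 0 ∧ x = Algebra.trace ℤ (𝓞 K) (α ^ 2)}
      (↑(min (m ^ 2 / p) (u * p * (p - 1)))) :=
  stmt_11_general p u m hp hm hpm K θ t b hb0 hb htr1 htr htr2
end

section
/- Let p be an odd prime, K a cyclic number field of degree p with conductor n = p²u, p ramified, and m > 1 an integer. If α = a_0(m − t) + a_1(m − θ(t)) + ⋯ + a_{p-1}(m − θ^{p-1}(t)) with a_i ∈ ℤ, then Tr_{K/ℚ}(α²) = p[ u p Σ_{i=0}^{p-1} a_i² + (m² − u)(Σ_{i=0}^{p-1} a_i)² ]. -/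
/-!
Expanding the square bilinearly, `Tr(α²) = ∑ᵢ ∑ⱼ aᵢ aⱼ Tr((m - θⁱ t)(m - θʲ t))`, and the given
traces make this Gram matrix `m² p - p u + p² u δᵢⱼ`. Summing against `aᵢ aⱼ` gives
`p (m² - u) (∑ aᵢ)² + p² u ∑ aᵢ²`.
-/

open NumberField

section GramSum

variable {R : Type*} [CommRing R] {A : Type*} [CommRing A] [Algebra R A]

theorem LinearMap.apply_sub_mul_sub (f : A →ₗ[R] R) (m : R) (y z : A) :
    f ((algebraMap R A m - y) * (algebraMap R A m - z)) =
      m ^ 2 * f 1 - m * f y - m * f z + f (y * z) := by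
  have hexpand : (algebraMap R A m - y) * (algebraMap R A m - z) =
      (m ^ 2) • (1 : A) - m • y - m • z + y * z := by
    simp only [Algebra.smul_def, map_pow, mul_one]
    ring
  rw [hexpand, map_add, map_sub, map_sub, map_smul, map_smul, map_smul, smul_eq_mul, smul_eq_mul,
    smul_eq_mul]

variable {ι : Type*} [Fintype ι]

theorem sum_sum_mul_mul_add_ite [DecidableEq ι] (a : ι → R) (c D E : R) :
    ∑ i, ∑ j, a i * a j * (c + if i = j then D else E) =
      (c + E) * (∑ i, a i) ^ 2 + (D - E) * ∑ i, a i ^ 2 := by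
  have hsplit : ∀ i j, a i * a j * (c + if i = j then D else E) =
      (c + E) * (a i * a j) + if i = j then (D - E) * a i ^ 2 else 0 := by
    intro i j
    split_ifs with h
    · subst h; ring
    · ring
  simp only [hsplit, Finset.sum_add_distrib, ← Finset.mul_sum, Finset.sum_ite_eq,
    Finset.mem_univ, if_true, sq, Finset.sum_mul_sum]

theorem LinearMap.apply_sq_sum_smul (f : A →ₗ[R] R) (a : ι → R) (y : ι → A) :
    f ((∑ i, a i • y i) ^ 2) = ∑ i, ∑ j, a i * a j * f (y i * y j) := by
  simp only [sq, Finset.sum_mul_sum, smul_mul_smul_comm, map_sum, map_smul, smul_eq_mul]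

theorem LinearMap.apply_sq_sum_smul_sub [DecidableEq ι] (f : A →ₗ[R] R) (x : ι → A) (a : ι → R)
    (m N D E : R) (h1 : f 1 = N) (hx : ∀ i, f (x i) = 0)
    (hxx : ∀ i j, f (x i * x j) = if i = j then D else E) :
    f ((∑ i, a i • (algebraMap R A m - x i)) ^ 2) =
      (m ^ 2 * N + E) * (∑ i, a i) ^ 2 + (D - E) * ∑ i, a i ^ 2 := by
  simp only [f.apply_sq_sum_smul, f.apply_sub_mul_sub, h1, hx, hxx, mul_zero, sub_zero]
  exact sum_sum_mul_mul_add_ite a _ D E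

end GramSum

theorem stmt_12_general (p u m : ℕ)
    (K : Type*) [Field K]
    (θ : 𝓞 K ≃ₐ[ℤ] 𝓞 K) (t : 𝓞 K)
    (htr1 : Algebra.trace ℤ (𝓞 K) 1 = p)
    (htr : ∀ i : ℕ, Algebra.trace ℤ (𝓞 K) ((θ ^ i) t) = 0)
    (htr2 : ∀ i j : ℕ, Algebra.trace ℤ (𝓞 K) ((θ ^ i) t * (θ ^ j) t) =
      if i % p = j % p then (p * u * (p - 1) : ℤ) else -(p * u))
    (a : Fin p → ℤ) :
    Algebra.trace ℤ (𝓞 K)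
      ((∑ i : Fin p, a i • ((m : 𝓞 K) - (θ ^ (i : ℕ)) t)) ^ 2) =
    (p : ℤ) *
      ((u : ℤ) * (p : ℤ) * ∑ i : Fin p, (a i) ^ 2 +
        ((m : ℤ) ^ 2 - (u : ℤ)) * (∑ i : Fin p, a i) ^ 2) := by
  have hgram : ∀ i j : Fin p, Algebra.trace ℤ (𝓞 K) ((θ ^ (i : ℕ)) t * (θ ^ (j : ℕ)) t) =
      if i = j then (p * u * (p - 1) : ℤ) else -(p * u) := by
    intro i j
    simp only [htr2, Nat.mod_eq_of_lt i.isLt, Nat.mod_eq_of_lt j.isLt, Fin.val_inj]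
  have hm : (m : 𝓞 K) = algebraMap ℤ (𝓞 K) m := (map_natCast _ m).symm
  rw [hm, (Algebra.trace ℤ (𝓞 K)).apply_sq_sum_smul_sub (fun i : Fin p ↦ (θ ^ (i : ℕ)) t) a
    _ _ _ _ htr1 (fun i ↦ htr i) hgram]
  ring

theorem stmt_12 (p n u m : ℕ) (hp : p.Prime) (hodd : Odd p)
    (hu : 0 < u) (hn : n = p ^ 2 * u) (hm : 1 < m)
    (K : Type*) [Field K] [NumberField K]
    (hdeg : Module.finrank ℚ K = p)
    (θ : 𝓞 K ≃ₐ[ℤ] 𝓞 K) (t : 𝓞 K)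
    (b : Module.Basis (Fin p) ℤ (𝓞 K)) (hb0 : b ⟨0, hp.pos⟩ = 1)
    (hb : ∀ i : Fin p, (i : ℕ) ≠ 0 → b i = (θ ^ (i : ℕ)) t)
    (htr1 : Algebra.trace ℤ (𝓞 K) 1 = p)
    (htr : ∀ i : ℕ, Algebra.trace ℤ (𝓞 K) ((θ ^ i) t) = 0)
    (htr2 : ∀ i j : ℕ, Algebra.trace ℤ (𝓞 K) ((θ ^ i) t * (θ ^ j) t) =
      if i % p = j % p then (p * u * (p - 1) : ℤ) else -(p * u))
    (a : Fin p → ℤ) :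
    Algebra.trace ℤ (𝓞 K)
      ((∑ i : Fin p, a i • ((m : 𝓞 K) - (θ ^ (i : ℕ)) t)) ^ 2) =
    (p : ℤ) *
      ((u : ℤ) * (p : ℤ) * ∑ i : Fin p, (a i) ^ 2 +
        ((m : ℤ) ^ 2 - (u : ℤ)) * (∑ i : Fin p, a i) ^ 2) :=
  stmt_12_general p u m K θ t htr1 htr htr2 a
end

section
/- Let p be an odd prime, K a cyclic number field of degree p with Gal(K/ℚ) = ⟨θ⟩, σ the canonical embedding into ℝ^p, and M ⊆ O_K a full-rank ℤ-module with θ(M) ⊆ M. Suppose α ∈ M \ ℤ is such that σ(α) is a shortest nonzero vector of the lattice Λ = σ(M). Then Tr_{K/ℚ}(α) ≠ 0 if and only if {σ(α), σ(θ(α)), …, σ(θ^{p-1}(α))} generates a well-rounded full-rank sublattice of Λ. -/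
open Polynomial Module

/-! Suppose `Tr α ≠ 0` and `α ∉ ℚ`. A polynomial `g` of degree `< p` with `g(θ) α = 0` is either
a multiple of the cyclotomic polynomial `Φ_p`, impossible since `Φ_p(θ) = 1 + θ + ⋯ + θ^(p-1)` sends
`α` to `Tr α ≠ 0`, or coprime to `Φ_p`, which forces `(θ - 1) α = 0` because
`(X - 1) Φ_p = X^p - 1` annihilates `θ`; so the conjugates of `α` are `ℚ`-linearly independent.
Their images under `σ` stay `ℝ`-linearly independent because their Gram matrix is the trace
matrix, whose determinant is the nonzero discriminant. Conversely, if `Tr α = 0` the conjugate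
vectors sum to `0`. Every nonzero vector of the sublattice lies in `σ(M)`, so it is no shorter
than `σ(α)`.

That `θ` has order `p` at all comes from the lattice: if `θ = 1`, then `σ` maps `M`, of rank
`p ≥ 2`, into a line, and its image there is dense, so `σ(M)` has no shortest vector. -/

theorem Module.End.linearIndependent_pow_apply {V : Type*} [AddCommGroup V] [Module ℚ V]
    {p : ℕ} [hp : Fact p.Prime] {T : Module.End ℚ V} (hT : T ^ p = 1) {v : V}
    (hΦ : aeval T (cyclotomic p ℚ) v ≠ 0) (hv : T v ≠ v) :
    LinearIndependent ℚ (fun i : Fin p => (T ^ (i : ℕ)) v) := by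
  rw [Fintype.linearIndependent_iff]
  intro c hc
  set g : ℚ[X] := ∑ i : Fin p, C (c i) * X ^ (i : ℕ)
  have hgv : aeval T g v = 0 := by
    simpa [g, Module.End.mul_apply] using hc
  have hcoeff : ∀ i : Fin p, g.coeff i = c i := by
    intro i
    simp [g, Fin.val_eq_val]
  suffices g = 0 by simpa [this] using fun i => (hcoeff i).symm
  by_contra hg0
  rcases (cyclotomic.irreducible_rat hp.out.pos).isCoprime_or_dvd g with ⟨u, w, huw⟩ | hdvd
  · -- `v = u(T) Φ(T) v`, and `(T - 1) Φ(T) = T ^ p - 1` kills it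
    have hker : aeval T (cyclotomic p ℚ * (X - 1)) = 0 := by
      rw [cyclotomic_prime_mul_X_sub_one, map_sub, map_pow, aeval_X, hT, map_one, sub_self]
    apply hv
    rw [← sub_eq_zero]
    calc T v - v = aeval T ((X - 1) * (u * cyclotomic p ℚ + w * g)) v := by
          simp [huw]
      _ = aeval T (u * (cyclotomic p ℚ * (X - 1))) v + aeval T ((X - 1) * w) (aeval T g v) := by
          rw [← Module.End.mul_apply, ← map_mul, ← LinearMap.add_apply, ← map_add]
          ring_nf
      _ = 0 := by rw [map_mul, hker, mul_zero, hgv, map_zero, LinearMap.zero_apply, add_zero]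
  · have hdeg : g.natDegree ≤ (cyclotomic p ℚ).natDegree := by
      rw [natDegree_cyclotomic, Nat.totient_prime hp.out]
      exact natDegree_sum_le_of_forall_le _ _ fun i _ =>
        (natDegree_C_mul_X_pow_le _ _).trans (Nat.le_pred_of_lt i.2)
    have hg := eq_leadingCoeff_mul_of_monic_of_dvd_of_natDegree_le (cyclotomic.monic p ℚ) hdvd hdeg
    apply hΦ
    rw [hg, map_mul, aeval_C, Module.End.mul_apply, Module.algebraMap_end_apply] at hgv
    exact (smul_eq_zero.mp hgv).resolve_left (leadingCoeff_ne_zero.mpr hg0)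

namespace AlgEquiv

section

variable {F K : Type*} [Field F] [Field K] [Algebra F K] [FiniteDimensional F K]
  {θ : K ≃ₐ[F] K}

theorem orderOf_dvd_finrank (θ : K ≃ₐ[F] K) : orderOf θ ∣ finrank F K := by
  let E := IntermediateField.fixedField (Subgroup.zpowers θ)
  refine ⟨finrank F E, ?_⟩
  rw [← Module.finrank_mul_finrank F E K, IntermediateField.finrank_fixedField_eq_card,
    Nat.card_zpowers, mul_comm]

theorem orderOf_eq_finrank_of_prime (hK : (finrank F K).Prime) (hθ : θ ≠ 1) :
    orderOf θ = finrank F K :=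
  (hK.eq_one_or_self_of_dvd _ θ.orderOf_dvd_finrank).resolve_left (mt orderOf_eq_one_iff.mp hθ)

theorem isGalois_of_orderOf_eq_finrank (hθ : ∀ g : K ≃ₐ[F] K, g ∈ Subgroup.zpowers θ)
    (h : orderOf θ = finrank F K) : IsGalois F K := by
  refine IsGalois.of_card_aut_eq_finrank F K ?_
  rw [← h, ← Nat.card_zpowers, (Subgroup.eq_top_iff' _).mpr hθ, Subgroup.card_top]

variable [IsGalois F K]

theorem mem_bot_of_apply_eq (hθ : ∀ g : K ≃ₐ[F] K, g ∈ Subgroup.zpowers θ) {x : K}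
    (hx : θ x = x) : x ∈ (⊥ : IntermediateField F K) :=
  (IsGalois.mem_bot_iff_fixed x).mpr fun g =>
    Subgroup.zpowers_le.mpr (MulAction.mem_stabilizer_iff.mpr hx) (hθ g)

theorem sum_pow_apply_eq_trace (hθ : ∀ g : K ≃ₐ[F] K, g ∈ Subgroup.zpowers θ) {n : ℕ}
    (hn : orderOf θ = n) (x : K) :
    ∑ i : Fin n, (θ ^ (i : ℕ)) x = algebraMap F K (Algebra.trace F K x) := by
  subst hn
  rw [trace_eq_sum_automorphisms]
  refine Fintype.sum_bijective _ ?_ _ _ fun _ => rfl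
  refine ⟨fun i j hij => Fin.ext (pow_injOn_Iio_orderOf i.2 j.2 hij), fun g => ?_⟩
  exact ⟨_, pow_finEquivZPowers_symm_apply (isOfFinOrder_of_finite θ) ⟨g, hθ g⟩⟩

end

theorem linearIndependent_pow_apply {K : Type*} [Field K] [NumberField K] [IsGalois ℚ K]
    {θ : K ≃ₐ[ℚ] K} (hθ : ∀ g : K ≃ₐ[ℚ] K, g ∈ Subgroup.zpowers θ) {p : ℕ}
    [Fact p.Prime] (hθp : orderOf θ = p) {α : K} (htr : Algebra.trace ℚ K α ≠ 0)
    (hα : α ∉ (⊥ : IntermediateField ℚ K)) :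
    LinearIndependent ℚ fun i : Fin p => (θ ^ (i : ℕ)) α := by
  have hT : θ.toLinearMap ^ p = 1 := by
    rw [← pow_toLinearMap, ← hθp, pow_orderOf_eq_one, one_toLinearMap, Module.End.one_eq_id]
  have hΦ : aeval θ.toLinearMap (cyclotomic p ℚ) α = algebraMap ℚ K (Algebra.trace ℚ K α) := by
    rw [← sum_pow_apply_eq_trace hθ hθp, cyclotomic_prime, Fin.sum_univ_eq_sum_range
      (fun i => (θ ^ i) α)]
    simp [← pow_toLinearMap]
  simpa [← pow_toLinearMap] using Module.End.linearIndependent_pow_apply hT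
    (by simpa [hΦ] using htr) fun h => hα (mem_bot_of_apply_eq hθ h)

end AlgEquiv

theorem mem_range_intCast_of_isIntegral {K : Type*} [Field K] [CharZero K] {x : K}
    (hx : x ∈ (⊥ : IntermediateField ℚ K)) (hint : IsIntegral ℤ x) :
    x ∈ Set.range (Int.cast : ℤ → K) := by
  obtain ⟨q, rfl⟩ := IntermediateField.mem_bot.mp hx
  obtain ⟨n, rfl⟩ := IsIntegrallyClosed.isIntegral_iff.mp
    ((isIntegral_algebraMap_iff (algebraMap ℚ K).injective).mp hint)
  exact ⟨n, by simp⟩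

theorem Submodule.exists_ne_zero_abs_lt {K ι : Type*} [AddCommGroup K] [Fintype ι]
    {M : Submodule ℤ K} (b : Basis ι ℤ M) (hι : 1 < Fintype.card ι) {f : K →+ ℝ}
    (hf : Function.Injective f) {ε : ℝ} (hε : 0 < ε) : ∃ m ∈ M, m ≠ 0 ∧ |f m| < ε := by
  rcases (M.toAddSubgroup.map f).dense_or_cyclic with hdense | ⟨a, ha⟩
  · obtain ⟨_, ⟨m, hm, rfl⟩, hpos, hlt⟩ := hdense.exists_between hε
    refine ⟨m, hm, ?_, by rwa [abs_of_pos hpos]⟩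
    rintro rfl
    simp at hpos
  · -- otherwise `f` would embed `M ≅ ℤ ^ ι` into the cyclic group `ℤ ∙ a`
    refine absurd ?_ hι.not_ge
    let g : M →ₗ[ℤ] ℤ ∙ a := (f.toIntLinearMap.domRestrict M).codRestrict _ fun m => by
      rw [Submodule.mem_span_singleton, ← AddSubgroup.mem_zmultiples_iff,
        AddSubgroup.zmultiples_eq_closure, ← ha]
      exact ⟨m, m.2, rfl⟩
    have hg : Function.Injective g := fun m m' h =>
      Subtype.ext (hf (congrArg Subtype.val h))
    calc Fintype.card ι = finrank ℤ M := (finrank_eq_card_basis b).symm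
      _ ≤ finrank ℤ (ℤ ∙ a) := LinearMap.finrank_le_finrank_of_injective hg
      _ ≤ 1 := by simpa using finrank_span_le_card (R := ℤ) ({a} : Set ℝ)

theorem exists_mem_ne_zero_of_mem_span_range {K E ι : Type*} [AddCommGroup K] [AddCommGroup E]
    {M : Submodule ℤ K} (f : K →+ E) {β : ι → K} (hβ : ∀ i, β i ∈ M) {v : E}
    (hv : v ∈ Submodule.span ℤ (Set.range fun i => f (β i))) (hv0 : v ≠ 0) :
    ∃ m ∈ M, m ≠ 0 ∧ f m = v := by
  rw [Set.range_comp' f β, ← AddMonoidHom.coe_toIntLinearMap, Submodule.span_image] at hv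
  obtain ⟨m, hm, rfl⟩ := hv
  refine ⟨m, Submodule.span_le.mpr (Set.range_subset_iff.mpr hβ) hm, ?_, rfl⟩
  rintro rfl
  exact hv0 (map_zero _)

noncomputable def realEmbeddingVec {K ι : Type*} [Ring K] (τ : ι → K →+* ℝ) :
    K →+ EuclideanSpace ℝ ι :=
  AddMonoidHom.mk' (fun x => WithLp.toLp 2 fun j => τ j x) fun x y => by ext; simp

@[simp]
theorem realEmbeddingVec_apply {K ι : Type*} [Ring K] (τ : ι → K →+* ℝ) (x : K) (j : ι) :
    realEmbeddingVec τ x j = τ j x := rfl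

namespace realEmbeddingVec

variable {K ι : Type*} [Field K] [Fintype ι] {τ : ι → K →+* ℝ}

theorem norm_sq_of_forall_eq {ρ : K →+* ℝ} (hτ : ∀ j, τ j = ρ) (x : K) :
    ‖realEmbeddingVec τ x‖ ^ 2 = Fintype.card ι * ρ x ^ 2 := by
  simp [EuclideanSpace.norm_sq_eq, hτ]

theorem exists_norm_lt_of_forall_eq [Nonempty ι] {ρ : K →+* ℝ} (hτ : ∀ j, τ j = ρ)
    {κ : Type*} [Fintype κ] {M : Submodule ℤ K} (b : Basis κ ℤ M) (hκ : 1 < Fintype.card κ)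
    {α : K} (hα : α ≠ 0) : ∃ x ∈ M, x ≠ 0 ∧ ‖realEmbeddingVec τ x‖ < ‖realEmbeddingVec τ α‖ := by
  obtain ⟨x, hxM, hx0, hlt⟩ := M.exists_ne_zero_abs_lt b hκ (f := ρ.toAddMonoidHom)
    ρ.injective (abs_pos.mpr (map_ne_zero ρ |>.mpr hα))
  refine ⟨x, hxM, hx0, ?_⟩
  rw [← sq_lt_sq₀ (norm_nonneg _) (norm_nonneg _), norm_sq_of_forall_eq hτ,
    norm_sq_of_forall_eq hτ]
  exact mul_lt_mul_of_pos_left (sq_lt_sq.mpr hlt) (by simp [Fintype.card_pos])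

variable [Algebra ℚ K]

theorem inner_eq_trace (hτ : ∀ x, ∑ j, τ j x = Algebra.trace ℚ K x) (x y : K) :
    inner ℝ (realEmbeddingVec τ x) (realEmbeddingVec τ y) = Algebra.trace ℚ K (x * y) := by
  simp [PiLp.inner_apply, ← hτ, mul_comm]

theorem linearIndependent [FiniteDimensional ℚ K] (hτ : ∀ x, ∑ j, τ j x = Algebra.trace ℚ K x)
    {κ : Type*} [Fintype κ] [DecidableEq κ] {β : κ → K} (hβ : LinearIndependent ℚ β)
    (hcard : Fintype.card κ = finrank ℚ K) :
    LinearIndependent ℝ (fun i => realEmbeddingVec τ (β i)) := by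
  have hgram : Matrix.gram ℝ (fun i => realEmbeddingVec τ (β i)) =
      (Algebra.traceMatrix ℚ β).map (Rat.cast : ℚ → ℝ) := by
    ext i j
    simp [Matrix.gram_apply, inner_eq_trace hτ, Algebra.traceMatrix]
  apply Matrix.linearIndependent_of_det_gram_ne_zero
  rw [hgram, ← Rat.cast_det, ← Algebra.discr_def, Rat.cast_ne_zero]
  simpa using
    Algebra.discr_not_zero_of_basis ℚ (basisOfLinearIndependentOfCardEqFinrank' β hβ hcard)

end realEmbeddingVec

theorem stmt_17_general (p : ℕ) (hp : p.Prime)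
    (K : Type*) [Field K] [NumberField K]
    (hdeg : Module.finrank ℚ K = p)
    (θ : K ≃ₐ[ℚ] K) (hgen : ∀ g : K ≃ₐ[ℚ] K, g ∈ Subgroup.zpowers θ)
    (ρ : K →+* ℝ)
    (σ : K → EuclideanSpace ℝ (Fin p))
    (hσ : ∀ x : K, σ x = fun j : Fin p => ρ ((θ ^ (j : ℕ)) x))
    (M : Submodule ℤ K)
    (hMint : ∀ x ∈ M, IsIntegral ℤ x)
    (bM : Module.Basis (Fin p) ℤ M)
    (hθM : ∀ x ∈ M, θ x ∈ M)
    (α : K) (hαM : α ∈ M)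
    (hα : α ∉ Set.range (Int.cast : ℤ → K))
    (hshort : ∀ x ∈ M, x ≠ 0 → ‖σ α‖ ≤ ‖σ x‖) :
    Algebra.trace ℚ K α ≠ 0 ↔
      (LinearIndependent ℝ (fun i : Fin p => σ ((θ ^ (i : ℕ)) α)) ∧
        ∀ v ∈ Submodule.span ℤ (Set.range fun i : Fin p => σ ((θ ^ (i : ℕ)) α)),
          v ≠ 0 → ‖σ α‖ ≤ ‖v‖) := by
  have : Fact p.Prime := ⟨hp⟩
  let τ : Fin p → K →+* ℝ := fun j => ρ.comp (θ ^ (j : ℕ) : K ≃ₐ[ℚ] K).toRingHom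
  have hστ : σ = realEmbeddingVec τ := funext fun x => WithLp.ofLp_injective 2 (hσ x)
  subst hστ
  have hθ1 : θ ≠ 1 := by
    rintro rfl
    obtain ⟨x, hxM, hx0, hlt⟩ := realEmbeddingVec.exists_norm_lt_of_forall_eq (τ := τ) (ρ := ρ)
      (fun j => by ext; simp [τ]) bM (by simpa using hp.one_lt)
      fun h : α = 0 => hα ⟨0, by simp [h]⟩
    exact (hshort x hxM hx0).not_gt hlt
  have horder : orderOf θ = p := hdeg ▸ θ.orderOf_eq_finrank_of_prime (hdeg ▸ hp) hθ1
  have : IsGalois ℚ K := θ.isGalois_of_orderOf_eq_finrank hgen (horder.trans hdeg.symm)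
  have hsum := θ.sum_pow_apply_eq_trace hgen horder
  have hτ : ∀ x, ∑ j, τ j x = Algebra.trace ℚ K x := fun x => by
    change ∑ j : Fin p, ρ ((θ ^ (j : ℕ)) x) = _
    rw [← map_sum, hsum, eq_ratCast, map_ratCast]
  constructor
  · intro htr
    have hQ := θ.linearIndependent_pow_apply hgen horder htr
      fun h => hα (mem_range_intCast_of_isIntegral h (hMint α hαM))
    refine ⟨realEmbeddingVec.linearIndependent hτ hQ (by rw [Fintype.card_fin, hdeg]),
      fun v hv hv0 => ?_⟩
    obtain ⟨m, hm, hm0, rfl⟩ := exists_mem_ne_zero_of_mem_span_range _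
      (fun i : Fin p => by rw [AlgEquiv.coe_pow]; exact (Set.MapsTo.iterate hθM i) hαM) hv hv0
    exact hshort m hm hm0
  · rintro ⟨hind, -⟩ htr
    have hzero : ∑ i : Fin p, realEmbeddingVec τ ((θ ^ (i : ℕ)) α) = 0 := by
      rw [← map_sum, hsum, htr, map_zero, map_zero]
    exact one_ne_zero (Fintype.linearIndependent_iff.mp hind (fun _ => 1)
      (by simpa using hzero) ⟨0, hp.pos⟩)

theorem stmt_17 (p : ℕ) (hp : p.Prime) (hodd : Odd p)
    (K : Type*) [Field K] [NumberField K]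
    (hdeg : Module.finrank ℚ K = p)
    (θ : K ≃ₐ[ℚ] K) (hgen : ∀ g : K ≃ₐ[ℚ] K, g ∈ Subgroup.zpowers θ)
    (ρ : K →+* ℝ)
    (σ : K → EuclideanSpace ℝ (Fin p))
    (hσ : ∀ x : K, σ x = fun j : Fin p => ρ ((θ ^ (j : ℕ)) x))
    (M : Submodule ℤ K)
    (hMint : ∀ x ∈ M, IsIntegral ℤ x)
    (bM : Module.Basis (Fin p) ℤ M)
    (hθM : ∀ x ∈ M, θ x ∈ M)
    (α : K) (hαM : α ∈ M) (hα0 : α ≠ 0)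
    (hα : α ∉ Set.range (Int.cast : ℤ → K))
    (hshort : ∀ x ∈ M, x ≠ 0 → ‖σ α‖ ≤ ‖σ x‖) :
    Algebra.trace ℚ K α ≠ 0 ↔
      (LinearIndependent ℝ (fun i : Fin p => σ ((θ ^ (i : ℕ)) α)) ∧
        ∀ v ∈ Submodule.span ℤ (Set.range fun i : Fin p => σ ((θ ^ (i : ℕ)) α)),
          v ≠ 0 → ‖σ α‖ ≤ ‖v‖) :=
  stmt_17_general p hp K hdeg θ hgen ρ σ hσ M hMint bM hθM α hαM hα hshort
end
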